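/- Root-invariance transfer: Under the hypotheses of the main theorem (expander sequence G_n with uniform degree bound converging locally weakly to random rooted graph (G,ρ) with law μ), every measurable function f : 𝒢 → ℝ that is invariant under change of root (f((τ,v)) = f((τ,v')) for all v, v' ∈ τ) is μ-almost surely constant. -/

import Mathlib

open MeasureTheory Filter
open scoped ENNReal

/-- A rooted isomorphism between two rooted graphs: a graph isomorphism mapping root to root. -/
def RootedIso {V₁ V₂ : Type*} (G₁ : SimpleGraph V₁) (o₁ : V₁)
    (G₂ : SimpleGraph V₂) (o₂ : V₂) : Prop :=
  ∃ e : G₁ ≃g G₂, e o₁ = o₂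

/-- The closed ball of radius `s` around `o` in the graph metric (as a set of vertices). -/
def ballSet {V : Type*} (G : SimpleGraph V) (o : V) (s : ℕ) : Set V :=
  {v | G.Reachable o v ∧ G.dist o v ≤ s}

lemma root_mem_ballSet {V : Type*} (G : SimpleGraph V) (o : V) (s : ℕ) :
    o ∈ ballSet G o s := ⟨SimpleGraph.Reachable.refl o, by simp [SimpleGraph.dist_self]⟩

/-- The closed ball of radius `s` around `o`, as a graph (induced subgraph on the ball),
rooted at `o`. -/
def ballGraph {V : Type*} (G : SimpleGraph V) (o : V) (s : ℕ) : SimpleGraph (ballSet G o s) :=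
  G.induce (ballSet G o s)

namespace RootedIso

lemma refl {V : Type*} (G : SimpleGraph V) (o : V) : RootedIso G o G o :=
  ⟨(SimpleGraph.Iso.refl : G ≃g G), rfl⟩

lemma symm {V₁ V₂ : Type*} {G₁ : SimpleGraph V₁} {o₁ : V₁} {G₂ : SimpleGraph V₂} {o₂ : V₂}
    (h : RootedIso G₁ o₁ G₂ o₂) : RootedIso G₂ o₂ G₁ o₁ := by
  obtain ⟨e, he⟩ := h
  exact ⟨e.symm, by simp [← he]⟩

lemma trans {V₁ V₂ V₃ : Type*} {G₁ : SimpleGraph V₁} {o₁ : V₁} {G₂ : SimpleGraph V₂} {o₂ : V₂}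
    {G₃ : SimpleGraph V₃} {o₃ : V₃}
    (h : RootedIso G₁ o₁ G₂ o₂) (h' : RootedIso G₂ o₂ G₃ o₃) : RootedIso G₁ o₁ G₃ o₃ := by
  obtain ⟨e, he⟩ := h; obtain ⟨e', he'⟩ := h'
  exact ⟨e.trans e', by simp [he, he']⟩

end RootedIso

section Geo

variable {V V₁ V₂ : Type*} {G : SimpleGraph V} {G₁ : SimpleGraph V₁} {G₂ : SimpleGraph V₂}

/-- walks with support inside `S` lift to the induced graph. -/
lemma walk_lift {S : Set V} {a b : V} (p : G.Walk a b) (hp : ∀ x ∈ p.support, x ∈ S)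
    (ha : a ∈ S) (hb : b ∈ S) :
    ∃ q : (G.induce S).Walk ⟨a, ha⟩ ⟨b, hb⟩, q.length = p.length := by
  induction p with
  | nil => exact ⟨.nil, rfl⟩
  | @cons u x w hadj p ih =>
      have hx : x ∈ S := hp x (by simp)
      obtain ⟨q, hq⟩ := ih (fun y hy => hp y (by simp [hy])) hx hb
      exact ⟨.cons (by exact hadj) q, by exact congrArg (· + 1) hq⟩

/-- distances from a point on a geodesic. -/
lemma dist_le_of_mem_support {a b x : V} (p : G.Walk a b) (hx : x ∈ p.support) :
    G.dist a x ≤ p.length := by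
  classical
  calc G.dist a x ≤ (p.takeUntil x hx).length := SimpleGraph.dist_le _
  _ ≤ p.length := SimpleGraph.Walk.length_takeUntil_le p hx

lemma reachable_triangle_dist {a b x : V} (h1 : G.Reachable a b) (h2 : G.Reachable b x) :
    G.dist a x ≤ G.dist a b + G.dist b x := by
  obtain ⟨p, hp⟩ := h1.exists_walk_length_eq_dist
  obtain ⟨q, hq⟩ := h2.exists_walk_length_eq_dist
  calc G.dist a x ≤ (p.append q).length := SimpleGraph.dist_le _
  _ = _ := by simp [hp, hq]

/-- **L1**: key membership lemma: for `w` in the `t`-ball around `o` with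
`dist o w + s ≤ t`, the `s`-ball around `w` (in `G`) coincides with the `s`-ball around `w`
computed inside the induced graph on the `t`-ball. -/
lemma mem_ballSet_induce_iff {o : V} {t s : ℕ} (w : ballSet G o t)
    (hws : G.dist o w + s ≤ t) (u : V) (hu : u ∈ ballSet G o t) :
    (⟨u, hu⟩ : ballSet G o t) ∈ ballSet (ballGraph G o t) w s ↔ u ∈ ballSet G (w : V) s := by
  classical
  constructor
  · rintro ⟨hreach, hdist⟩
    obtain ⟨q, hq⟩ := hreach.exists_walk_length_eq_dist
    have : (ballGraph G o t).dist w ⟨u, hu⟩ = q.length := hq.symm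
    -- map down
    let p := q.map (SimpleGraph.Embedding.induce (ballSet G o t)).toHom
    refine ⟨⟨p⟩, ?_⟩
    have hl : p.length = q.length := SimpleGraph.Walk.length_map _ _
    calc G.dist (w : V) u ≤ p.length := SimpleGraph.dist_le _
    _ = q.length := hl
    _ ≤ s := by rw [hq]; exact hdist
  · rintro ⟨hreach, hdist⟩
    obtain ⟨p, hp⟩ := hreach.exists_walk_length_eq_dist
    have hsupp : ∀ x ∈ p.support, x ∈ ballSet G o t := by
      intro x hx
      have h1 : G.dist (w : V) x ≤ p.length := dist_le_of_mem_support p hx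
      have hreachwx : G.Reachable (w : V) x := ⟨(p.takeUntil x hx).copy rfl rfl⟩
      refine ⟨w.2.1.trans hreachwx, ?_⟩
      have := reachable_triangle_dist w.2.1 hreachwx
      have h2 : G.dist (w : V) x ≤ s := by omega
      have h3 : G.dist o (w : V) + s ≤ t := hws
      omega
    obtain ⟨q, hq⟩ := walk_lift p hsupp w.2 hu
    refine ⟨⟨q.copy (by simp) rfl⟩, ?_⟩
    calc (ballGraph G o t).dist w ⟨u, hu⟩ ≤ (q.copy (by simp) rfl).length := SimpleGraph.dist_le _
    _ = p.length := by simp [hq]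
    _ ≤ s := by rw [hp]; exact hdist

/-- **L1** as a rooted isomorphism: taking an `s`-ball inside the `t`-ball graph is the same
as taking it in `G`. -/
lemma rootedIso_ball_induce {o : V} {t s : ℕ} (w : ballSet G o t)
    (hws : G.dist o w + s ≤ t) :
    RootedIso (ballGraph G (w : V) s) ⟨w, root_mem_ballSet _ _ _⟩
      (ballGraph (ballGraph G o t) w s) ⟨w, root_mem_ballSet _ _ _⟩ := by
  have hmem : ∀ u : V, u ∈ ballSet G (w : V) s → u ∈ ballSet G o t := by
    rintro u ⟨hreach, hdist⟩
    exact ⟨w.2.1.trans hreach, le_trans (le_trans (reachable_triangle_dist w.2.1 hreach)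
      (by omega)) (le_refl _)⟩
  let E : ballSet G (w : V) s ≃ ballSet (ballGraph G o t) w s :=
    { toFun := fun u => ⟨⟨u, hmem u u.2⟩,
        (mem_ballSet_induce_iff w hws u (hmem u u.2)).mpr u.2⟩
      invFun := fun x => ⟨(x.1 : V), (mem_ballSet_induce_iff w hws (x.1 : V) x.1.2).mp
        (by convert x.2)⟩
      left_inv := fun u => rfl
      right_inv := fun x => by apply Subtype.ext; apply Subtype.ext; rfl }
  exact ⟨⟨E, fun {a b} => Iff.rfl⟩, rfl⟩

/-- **L0**: isos preserve reachability and distance. -/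
lemma Iso.reachable_iff (e : G₁ ≃g G₂) {a b : V₁} :
    G₂.Reachable (e a) (e b) ↔ G₁.Reachable a b := by
  constructor
  · rintro ⟨p⟩
    exact ⟨(p.map e.symm.toHom).copy (e.toEquiv.symm_apply_apply a)
      (e.toEquiv.symm_apply_apply b)⟩
  · rintro ⟨p⟩
    exact ⟨p.map e.toHom⟩

lemma Iso.dist_eq (e : G₁ ≃g G₂) (a b : V₁) :
    G₂.dist (e a) (e b) = G₁.dist a b := by
  apply le_antisymm
  · by_cases h : G₁.Reachable a b
    · obtain ⟨p, hp⟩ := h.exists_walk_length_eq_dist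
      calc G₂.dist (e a) (e b) ≤ (p.map e.toHom).length := SimpleGraph.dist_le _
      _ = _ := by rw [SimpleGraph.Walk.length_map, hp]
    · rw [SimpleGraph.dist_eq_zero_of_not_reachable h,
        SimpleGraph.dist_eq_zero_of_not_reachable ((Iso.reachable_iff e).not.mpr h)]
  · by_cases h : G₂.Reachable (e a) (e b)
    · obtain ⟨p, hp⟩ := h.exists_walk_length_eq_dist
      calc G₁.dist a b ≤ ((p.map e.symm.toHom).copy (e.toEquiv.symm_apply_apply a)
            (e.toEquiv.symm_apply_apply b)).length :=
            SimpleGraph.dist_le _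
      _ = _ := by exact (SimpleGraph.Walk.length_copy _ _ _).trans ((SimpleGraph.Walk.length_map _ _).trans hp)
    · rw [SimpleGraph.dist_eq_zero_of_not_reachable h,
        SimpleGraph.dist_eq_zero_of_not_reachable (fun hr => h ((Iso.reachable_iff e).mpr hr))]

/-- **L2**: isos commute with taking balls. -/
lemma rootedIso_ball_map (e : G₁ ≃g G₂) (v : V₁) (s : ℕ) :
    RootedIso (ballGraph G₁ v s) ⟨v, root_mem_ballSet _ _ _⟩
      (ballGraph G₂ (e v) s) ⟨e v, root_mem_ballSet _ _ _⟩ := by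
  have hmem : ∀ u : V₁, u ∈ ballSet G₁ v s ↔ (e u : V₂) ∈ ballSet G₂ (e v) s := by
    intro u
    constructor
    · rintro ⟨hr, hd⟩
      exact ⟨((Iso.reachable_iff e).mpr hr), by rw [Iso.dist_eq e]; exact hd⟩
    · rintro ⟨hr, hd⟩
      exact ⟨(Iso.reachable_iff e).mp hr, by rw [← Iso.dist_eq e]; exact hd⟩
  refine ⟨⟨Equiv.subtypeEquiv e.toEquiv hmem, ?_⟩, rfl⟩
  intro a b
  exact e.map_adj_iff

end Geo

/-- `B_{G₁}(o₁,s) ≅ B_{G₂}(o₂,s)`: the rooted balls of radius `s` are isomorphic as rooted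
graphs. -/
def BallsIso {V₁ V₂ : Type*} (G₁ : SimpleGraph V₁) (o₁ : V₁)
    (G₂ : SimpleGraph V₂) (o₂ : V₂) (s : ℕ) : Prop :=
  RootedIso (ballGraph G₁ o₁ s) ⟨o₁, root_mem_ballSet G₁ o₁ s⟩
    (ballGraph G₂ o₂ s) ⟨o₂, root_mem_ballSet G₂ o₂ s⟩

section Part2

variable {V V₁ V₂ V₃ : Type*} {G : SimpleGraph V} {G₁ : SimpleGraph V₁} {G₂ : SimpleGraph V₂}
  {G₃ : SimpleGraph V₃}

lemma BallsIso.refl (G : SimpleGraph V) (o : V) (s : ℕ) : BallsIso G o G o s :=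
  RootedIso.refl _ _

lemma BallsIso.symm {o₁ : V₁} {o₂ : V₂} {s : ℕ} (h : BallsIso G₁ o₁ G₂ o₂ s) :
    BallsIso G₂ o₂ G₁ o₁ s := RootedIso.symm h

lemma BallsIso.trans {o₁ : V₁} {o₂ : V₂} {o₃ : V₃} {s : ℕ} (h : BallsIso G₁ o₁ G₂ o₂ s)
    (h' : BallsIso G₂ o₂ G₃ o₃ s) : BallsIso G₁ o₁ G₃ o₃ s := RootedIso.trans h h'

/-- A rooted iso of rooted graphs induces isos of all balls. -/
lemma RootedIso.ballsIso {o₁ : V₁} {o₂ : V₂} (h : RootedIso G₁ o₁ G₂ o₂) (s : ℕ) :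
    BallsIso G₁ o₁ G₂ o₂ s := by
  obtain ⟨e, he⟩ := h
  have := rootedIso_ball_map e o₁ s
  rw [he] at this
  exact this

/-- Monotonicity: isomorphism of `t`-balls gives isomorphism of `s`-balls for `s ≤ t`. -/
lemma BallsIso.mono {o₁ : V₁} {o₂ : V₂} {s t : ℕ} (h : BallsIso G₁ o₁ G₂ o₂ t) (hst : s ≤ t) :
    BallsIso G₁ o₁ G₂ o₂ s := by
  obtain ⟨e, he⟩ := h
  have h1 := rootedIso_ball_induce (G := G₁) (⟨o₁, root_mem_ballSet G₁ o₁ t⟩)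
    (by simpa [SimpleGraph.dist_self] using hst)
  have h2 := rootedIso_ball_map e (⟨o₁, root_mem_ballSet G₁ o₁ t⟩) s
  rw [he] at h2
  have h3 := rootedIso_ball_induce (G := G₂) (⟨o₂, root_mem_ballSet G₂ o₂ t⟩)
    (by simpa [SimpleGraph.dist_self] using hst)
  exact (h1.trans h2).trans h3.symm

lemma mem_ballSet_of_adj {o w : V} {s : ℕ} (h : G.Adj o w) : w ∈ ballSet G o (s + 1) :=
  ⟨h.reachable, le_trans (by simpa using SimpleGraph.dist_le (SimpleGraph.Walk.cons h .nil))
    (by omega)⟩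

/-- Key neighbor lemma: an isomorphism of `(s+1)`-balls carries neighbors of the root to
neighbors of the root, matching their `s`-balls. -/
lemma BallsIso.neighbor {o₁ : V₁} {o₂ : V₂} {s : ℕ} (h : BallsIso G₁ o₁ G₂ o₂ (s + 1))
    {w : V₁} (ha : G₁.Adj o₁ w) :
    ∃ w' : V₂, G₂.Adj o₂ w' ∧ BallsIso G₁ w G₂ w' s := by
  obtain ⟨e, he⟩ := h
  have hwmem : w ∈ ballSet G₁ o₁ (s + 1) := mem_ballSet_of_adj ha
  set W := e ⟨w, hwmem⟩ with hW
  refine ⟨(W : V₂), ?_, ?_⟩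
  · have hadj : (ballGraph G₁ o₁ (s+1)).Adj ⟨o₁, root_mem_ballSet _ _ _⟩ ⟨w, hwmem⟩ := ha
    have := e.map_adj_iff.mpr hadj
    rw [he] at this
    exact this
  · have hd1 : G₁.dist o₁ w ≤ 1 :=
      by simpa using SimpleGraph.dist_le (SimpleGraph.Walk.cons ha .nil)
    have hadj2 : G₂.Adj o₂ (W : V₂) := by
      have hadj : (ballGraph G₁ o₁ (s+1)).Adj ⟨o₁, root_mem_ballSet _ _ _⟩ ⟨w, hwmem⟩ := ha
      have := e.map_adj_iff.mpr hadj
      rw [he] at this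
      exact this
    have hd2 : G₂.dist o₂ (W : V₂) ≤ 1 :=
      by simpa using SimpleGraph.dist_le (SimpleGraph.Walk.cons hadj2 .nil)
    have h1 := rootedIso_ball_induce (G := G₁) (⟨w, hwmem⟩) (t := s+1) (s := s)
      (by show G₁.dist o₁ w + s ≤ s + 1; omega)
    have h2 := rootedIso_ball_map e (⟨w, hwmem⟩) s
    have h3 := rootedIso_ball_induce (G := G₂) W (t := s+1) (s := s) (by omega)
    exact (h1.trans h2).trans h3.symm

/-- counting: `ncard` of a finite union. -/
lemma ncard_biUnion_le {ι α : Type*} (s : Finset ι) (t : ι → Set α)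
    (ht : ∀ i ∈ s, (t i).Finite) :
    (⋃ i ∈ s, t i).ncard ≤ ∑ i ∈ s, (t i).ncard := by
  classical
  induction s using Finset.induction with
  | empty => simp
  | @insert a s ha ih =>
      rw [Finset.set_biUnion_insert]
      refine le_trans (Set.ncard_union_le _ _) ?_
      rw [Finset.sum_insert ha]
      exact Nat.add_le_add le_rfl (ih (fun i hi => ht i (Finset.mem_insert_of_mem hi)))

lemma ncard_biUnion_eq {ι α : Type*} (s : Finset ι) (t : ι → Set α)
    (ht : ∀ i ∈ s, (t i).Finite)
    (hdisj : ∀ i ∈ s, ∀ j ∈ s, i ≠ j → Disjoint (t i) (t j)) :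
    (⋃ i ∈ s, t i).ncard = ∑ i ∈ s, (t i).ncard := by
  classical
  induction s using Finset.induction with
  | empty => simp
  | @insert a s ha ih =>
      have hd : Disjoint (t a) (⋃ i ∈ s, t i) := by
        refine Set.disjoint_iUnion_right.mpr (fun i => Set.disjoint_iUnion_right.mpr ?_)
        intro hi
        exact hdisj a (Finset.mem_insert_self a s) i (Finset.mem_insert_of_mem hi)
          (by rintro rfl; exact ha hi)
      rw [Finset.set_biUnion_insert, Finset.sum_insert ha,
        Set.ncard_union_eq hd (ht a (Finset.mem_insert_self a s))
          (Set.Finite.biUnion s.finite_toSet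
            (fun i hi => ht i (Finset.mem_insert_of_mem hi))),
        ih (fun i hi => ht i (Finset.mem_insert_of_mem hi))
          (fun i hi j hj hij => hdisj i (Finset.mem_insert_of_mem hi) j
            (Finset.mem_insert_of_mem hj) hij)]

/-- growth bound for balls. -/
lemma ballSet_finite_card {Δ : ℕ} (G : SimpleGraph V) (o : V)
    (hfin : ∀ v, (G.neighborSet v).Finite) (hdeg : ∀ v, (G.neighborSet v).ncard ≤ Δ)
    (R : ℕ) : (ballSet G o R).Finite ∧ (ballSet G o R).ncard ≤ (Δ + 1) ^ R := by
  classical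
  induction R with
  | zero =>
      have h0 : ballSet G o 0 = {o} := by
        ext v
        constructor
        · rintro ⟨hr, hd⟩
          have : G.dist o v = 0 := by omega
          rcases SimpleGraph.dist_eq_zero_iff_eq_or_not_reachable.mp this with h | h
          · exact h.symm ▸ rfl
          · exact absurd hr h
        · rintro rfl
          exact root_mem_ballSet G _ 0
      rw [h0]
      simp
  | succ R ih =>
      obtain ⟨ihfin, ihcard⟩ := ih
      have hsub : ballSet G o (R + 1) ⊆
          ballSet G o R ∪ ⋃ u ∈ ihfin.toFinset, G.neighborSet u := by
        rintro x ⟨hr, hd⟩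
        by_cases hx : G.dist o x ≤ R
        · exact Or.inl ⟨hr, hx⟩
        · obtain ⟨p, hp⟩ := hr.exists_walk_length_eq_dist
          have hplen : p.length = G.dist o x := hp
          have hxo : x ≠ o := by
            rintro rfl
            simp [SimpleGraph.dist_self] at hx
          right
          cases hrev : p.reverse with
          | nil => exact absurd rfl hxo
          | @cons _ y _ hadj q =>
              have hylen : q.length = p.length - 1 := by
                have := congrArg SimpleGraph.Walk.length hrev
                simp at this
                omega
              have hyball : y ∈ ballSet G o R := by
                refine ⟨⟨q.reverse⟩, ?_⟩
                calc G.dist o y ≤ q.reverse.length := SimpleGraph.dist_le _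
                _ = q.length := by simp
                _ ≤ R := by omega
              refine Set.mem_biUnion (ihfin.mem_toFinset.mpr hyball) ?_
              exact hadj.symm
      have hfin2 : (ballSet G o R ∪ ⋃ u ∈ ihfin.toFinset, G.neighborSet u).Finite :=
        Set.Finite.union ihfin (Set.Finite.biUnion (Set.finite_mem_finset _)
          (fun u _ => hfin u))
      constructor
      · exact hfin2.subset hsub
      · calc (ballSet G o (R+1)).ncard ≤ _ := Set.ncard_le_ncard hsub hfin2
        _ ≤ (ballSet G o R).ncard + (⋃ u ∈ ihfin.toFinset, G.neighborSet u).ncard :=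
            Set.ncard_union_le _ _
        _ ≤ (ballSet G o R).ncard + ∑ u ∈ ihfin.toFinset, (G.neighborSet u).ncard :=
            Nat.add_le_add le_rfl (ncard_biUnion_le _ _ (fun u _ => hfin u))
        _ ≤ (Δ+1)^R + ∑ u ∈ ihfin.toFinset, Δ := by
            refine Nat.add_le_add ihcard (Finset.sum_le_sum (fun u _ => hdeg u))
        _ = (Δ+1)^R + ihfin.toFinset.card * Δ := by simp [Finset.sum_const, Nat.mul_comm]
        _ ≤ (Δ+1)^R + (Δ+1)^R * Δ := by
            refine Nat.add_le_add le_rfl (Nat.mul_le_mul_right _ ?_)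
            rwa [← Set.ncard_eq_toFinset_card _ ihfin]
        _ = (Δ+1)^(R+1) := by ring
      
end Part2

section Part3

variable {V : Type*}

/-- Classification: any finite ball is isomorphic to a ball of a graph on `Fin m`. -/
lemma exists_ballsIso_fin (G : SimpleGraph V) (v : V) (R : ℕ)
    (hfin : (ballSet G v R).Finite) :
    ∃ (m : ℕ) (H : SimpleGraph (Fin m)) (r : Fin m),
      m = (ballSet G v R).ncard ∧ BallsIso G v H r R := by
  classical
  haveI := hfin.fintype
  have hcard : Nat.card (ballSet G v R) = (ballSet G v R).ncard :=
    Nat.card_coe_set_eq _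
  obtain ⟨e0⟩ : Nonempty (↥(ballSet G v R) ≃ Fin ((ballSet G v R).ncard)) :=
    ⟨Finite.equivFinOfCardEq hcard⟩
  have ι : ballGraph G v R ≃g SimpleGraph.comap (⇑e0.symm) (ballGraph G v R) := by
    refine ⟨e0, ?_⟩
    intro a b
    show (ballGraph G v R).Adj (e0.symm (e0 a)) (e0.symm (e0 b)) ↔ _
    rw [e0.symm_apply_apply, e0.symm_apply_apply]
  refine ⟨(ballSet G v R).ncard,
    SimpleGraph.comap (⇑e0.symm) (ballGraph G v R), ι ⟨v, root_mem_ballSet G v R⟩, rfl, ?_⟩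
  have h1 := rootedIso_ball_induce (G := G) (⟨v, root_mem_ballSet G v R⟩) (t := R) (s := R)
    (by simp [SimpleGraph.dist_self])
  have h2 := rootedIso_ball_map ι (⟨v, root_mem_ballSet G v R⟩) R
  exact h1.trans h2

namespace RIT

variable (Δ : ℕ)

/-- The (finite) index type of candidate `R`-ball types. -/
def JJ (R : ℕ) : Type := Σ m : Fin ((Δ + 1) ^ R + 1), SimpleGraph (Fin m.1) × Fin m.1

instance (R : ℕ) : Finite (JJ Δ R) := by unfold JJ; infer_instance

/-- `v`'s `R`-ball in `G` has type `j`. -/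
def typed (R : ℕ) (j : JJ Δ R) {V : Type*} (G : SimpleGraph V) (v : V) : Prop :=
  BallsIso G v j.2.1 j.2.2 R

instance jsetoid (R : ℕ) : Setoid (JJ Δ R) :=
  ⟨fun j j' => BallsIso j.2.1 j.2.2 j'.2.1 j'.2.2 R,
    ⟨fun j => BallsIso.refl _ _ _, BallsIso.symm, BallsIso.trans⟩⟩

lemma jrel_def (R : ℕ) {j j' : JJ Δ R} :
    j ≈ j' ↔ BallsIso j.2.1 j.2.2 j'.2.1 j'.2.2 R := Iff.rfl

/-- canonical representative of a type. -/
noncomputable def rep (R : ℕ) (j : JJ Δ R) : JJ Δ R := (⟦j⟧ : Quotient (jsetoid Δ R)).out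

lemma rep_rel (R : ℕ) (j : JJ Δ R) : rep Δ R j ≈ j := Quotient.mk_out j

lemma rep_eq_of_rel (R : ℕ) {j j' : JJ Δ R} (h : j ≈ j') : rep Δ R j = rep Δ R j' :=
  congrArg Quotient.out (Quotient.sound h)

lemma rep_idem (R : ℕ) (j : JJ Δ R) : rep Δ R (rep Δ R j) = rep Δ R j :=
  rep_eq_of_rel Δ R (rep_rel Δ R j)

lemma typed_congr {R : ℕ} {j j' : JJ Δ R} (h : j ≈ j') {V : Type*} {G : SimpleGraph V}
    {v : V} : typed Δ R j G v ↔ typed Δ R j' G v :=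
  ⟨fun t => t.trans h, fun t => t.trans (Setoid.symm h)⟩

/-- Totality: every vertex of a `Δ`-degree-bounded graph has a canonical `R`-type. -/
lemma typed_exists {V : Type*} (G : SimpleGraph V) (v : V) (R : ℕ)
    (hfin : ∀ u, (G.neighborSet u).Finite) (hdeg : ∀ u, (G.neighborSet u).ncard ≤ Δ) :
    ∃ j : JJ Δ R, rep Δ R j = j ∧ typed Δ R j G v := by
  obtain ⟨hbfin, hbcard⟩ := ballSet_finite_card (Δ := Δ) G v hfin hdeg R
  obtain ⟨m, H, r, hm, hiso⟩ := exists_ballsIso_fin G v R hbfin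
  have hmlt : m < (Δ + 1) ^ R + 1 := by omega
  set j0 : JJ Δ R := ⟨⟨m, hmlt⟩, H, r⟩ with hj0
  refine ⟨rep Δ R j0, rep_idem Δ R j0, ?_⟩
  have : typed Δ R j0 G v := hiso
  exact (typed_congr Δ (rep_rel Δ R j0)).mpr this

/-- Uniqueness of the canonical type. -/
lemma typed_unique {R : ℕ} {j j' : JJ Δ R} (h : rep Δ R j = j) (h' : rep Δ R j' = j')
    {V : Type*} {G : SimpleGraph V} {v : V}
    (t : typed Δ R j G v) (t' : typed Δ R j' G v) : j = j' := by
  have hrel : j ≈ j' := (t.symm).trans t'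
  rw [← h, ← h', rep_eq_of_rel Δ R hrel]

/-- refinement: a coarser type is determined by a finer type. -/
lemma typed_mono {R R' : ℕ} (hRR : R ≤ R') {j : JJ Δ R} {j' : JJ Δ R'} {V : Type*}
    {G : SimpleGraph V} {v : V} (hv' : typed Δ R' j' G v)
    (hj : typed Δ R j j'.2.1 j'.2.2) : typed Δ R j G v :=
  (hv'.mono hRR).trans hj

lemma typed_mono' {R R' : ℕ} (hRR : R ≤ R') {j : JJ Δ R} {j' : JJ Δ R'} {V : Type*}
    {G : SimpleGraph V} {v : V} (hv' : typed Δ R' j' G v)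
    (hv : typed Δ R j G v) : typed Δ R j j'.2.1 j'.2.2 :=
  ((hv'.mono hRR).symm).trans hv

end RIT
end Part3

/-- A rooted connected graph with all degrees bounded by `Δ`, with vertex set a subset of `ℕ`
(every connected graph of bounded degree is countable, so this loses no generality). -/
structure RootedGraph (Δ : ℕ) where
  verts : Set ℕ
  graph : SimpleGraph verts
  root : verts
  conn : graph.Connected
  locFin : ∀ v, (graph.neighborSet v).Finite
  degBdd : ∀ v, (graph.neighborSet v).ncard ≤ Δ

/-- The σ-algebra on rooted graphs generated by the cylinder events
"the `R`-ball around the root is isomorphic to a given finite rooted graph". -/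
instance rootedGraphMeasurableSpace (Δ : ℕ) : MeasurableSpace (RootedGraph Δ) :=
  .generateFrom {S | ∃ (m : ℕ) (H : SimpleGraph (Fin m)) (r : Fin m) (R : ℕ),
    S = {X : RootedGraph Δ | BallsIso X.graph X.root H r R}}

namespace RIT

variable (Δ : ℕ)

def isRep (R : ℕ) (j : JJ Δ R) : Prop := rep Δ R j = j

/-- The cylinder event of a single type. -/
def Ev (R : ℕ) (j : JJ Δ R) : Set (RootedGraph Δ) := {X | typed Δ R j X.graph X.root}

lemma Ev_measurable (R : ℕ) (j : JJ Δ R) : MeasurableSet (Ev Δ R j) :=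
  MeasurableSpace.measurableSet_generateFrom ⟨j.1.1, j.2.1, j.2.2, R, rfl⟩

/-- The union of the cylinder events with types in `T`. -/
def EvU (R : ℕ) (T : Set (JJ Δ R)) : Set (RootedGraph Δ) :=
  {X | ∃ j ∈ T, typed Δ R j X.graph X.root}

lemma EvU_eq_biUnion (R : ℕ) (T : Set (JJ Δ R)) :
    EvU Δ R T = ⋃ j ∈ (Set.toFinite T).toFinset, Ev Δ R j := by
  ext X
  simp [EvU, Ev, Set.Finite.mem_toFinset]

lemma EvU_measurable (R : ℕ) (T : Set (JJ Δ R)) : MeasurableSet (EvU Δ R T) := by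
  rw [EvU_eq_biUnion]
  exact MeasurableSet.biUnion (Set.to_countable _) (fun j _ => Ev_measurable Δ R j)

lemma X_locFin (X : RootedGraph Δ) : ∀ u, (X.graph.neighborSet u).Finite := X.locFin
lemma X_degBdd (X : RootedGraph Δ) : ∀ u, (X.graph.neighborSet u).ncard ≤ Δ := X.degBdd

/-- every rooted graph is in some atom. -/
lemma exists_atom (R : ℕ) (X : RootedGraph Δ) :
    ∃ j : JJ Δ R, isRep Δ R j ∧ X ∈ Ev Δ R j :=
  typed_exists Δ X.graph X.root R X.locFin X.degBdd

lemma atom_disjoint {R : ℕ} {j j' : JJ Δ R} (h : isRep Δ R j) (h' : isRep Δ R j')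
    (hne : j ≠ j') : Disjoint (Ev Δ R j) (Ev Δ R j') := by
  rw [Set.disjoint_left]
  rintro X hX hX'
  exact hne (typed_unique Δ h h' hX hX')

/-- complement of an atom union. -/
lemma EvU_compl (R : ℕ) (T : Set (JJ Δ R)) (hT : ∀ j ∈ T, isRep Δ R j) :
    (EvU Δ R T)ᶜ = EvU Δ R ({j | isRep Δ R j} \ T) := by
  ext X
  obtain ⟨j0, hj0rep, hj0⟩ := exists_atom Δ R X
  simp only [Set.mem_compl_iff, EvU, Set.mem_setOf_eq, Set.mem_diff]
  constructor
  · intro h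
    exact ⟨j0, ⟨hj0rep, fun hj0T => h ⟨j0, hj0T, hj0⟩⟩, hj0⟩
  · rintro ⟨j, ⟨hjrep, hjT⟩, hj⟩ ⟨j', hj'T, hj'⟩
    exact hjT (typed_unique Δ hjrep (hT j' hj'T) hj hj' ▸ hj'T)

/-- generic refinement of a union of atoms to a finer radius. -/
lemma typed_refine {R R' : ℕ} (hRR : R ≤ R') (T : Set (JJ Δ R)) {V : Type*}
    (G : SimpleGraph V) (v : V)
    (hfin : ∀ u, (G.neighborSet u).Finite) (hdeg : ∀ u, (G.neighborSet u).ncard ≤ Δ) :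
    (∃ j ∈ T, typed Δ R j G v) ↔
      (∃ j' ∈ {j' : JJ Δ R' | isRep Δ R' j' ∧ ∃ j ∈ T, typed Δ R j j'.2.1 j'.2.2},
        typed Δ R' j' G v) := by
  constructor
  · rintro ⟨j, hjT, hj⟩
    obtain ⟨j', hj'rep, hj'⟩ := typed_exists Δ G v R' hfin hdeg
    exact ⟨j', ⟨hj'rep, ⟨j, hjT, typed_mono' Δ hRR hj' hj⟩⟩, hj'⟩
  · rintro ⟨j', ⟨hj'rep, ⟨j, hjT, hj⟩⟩, hj'⟩
    exact ⟨j, hjT, typed_mono Δ hRR hj' hj⟩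

lemma EvU_refine {R R' : ℕ} (hRR : R ≤ R') (T : Set (JJ Δ R)) :
    EvU Δ R T = EvU Δ R'
      {j' : JJ Δ R' | isRep Δ R' j' ∧ ∃ j ∈ T, typed Δ R j j'.2.1 j'.2.2} := by
  ext X
  exact typed_refine Δ hRR T X.graph X.root X.locFin X.degBdd

/-- The algebra of finite unions of atoms. -/
def UAlg : Set (Set (RootedGraph Δ)) :=
  {W | ∃ (R : ℕ) (T : Set (JJ Δ R)), (∀ j ∈ T, isRep Δ R j) ∧ W = EvU Δ R T}

lemma UAlg_measurable {W : Set (RootedGraph Δ)} (h : W ∈ UAlg Δ) : MeasurableSet W := by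
  obtain ⟨R, T, _, rfl⟩ := h
  exact EvU_measurable Δ R T

lemma UAlg_empty : (∅ : Set (RootedGraph Δ)) ∈ UAlg Δ :=
  ⟨0, ∅, by simp, by ext X; simp [EvU]⟩

lemma UAlg_univ : (Set.univ : Set (RootedGraph Δ)) ∈ UAlg Δ := by
  refine ⟨0, {j | isRep Δ 0 j}, fun j hj => hj, ?_⟩
  ext X
  simp only [Set.mem_univ, true_iff, EvU, Set.mem_setOf_eq]
  obtain ⟨j, hjrep, hj⟩ := exists_atom Δ 0 X
  exact ⟨j, hjrep, hj⟩

lemma UAlg_compl {W : Set (RootedGraph Δ)} (h : W ∈ UAlg Δ) : Wᶜ ∈ UAlg Δ := by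
  obtain ⟨R, T, hT, rfl⟩ := h
  exact ⟨R, _, fun j hj => hj.1, EvU_compl Δ R T hT⟩

/-- bump an atom union to a finer radius (in `UAlg` form). -/
lemma UAlg_refine {W : Set (RootedGraph Δ)} (h : W ∈ UAlg Δ) (R' : ℕ) :
    ∃ (R : ℕ) (T : Set (JJ Δ R)), R' ≤ R ∧ (∀ j ∈ T, isRep Δ R j) ∧ W = EvU Δ R T := by
  obtain ⟨R, T, hT, rfl⟩ := h
  rcases le_total R' R with hle | hle
  · exact ⟨R, T, hle, hT, rfl⟩
  · exact ⟨R', _, le_refl _, fun j hj => hj.1, EvU_refine Δ hle T⟩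

/-- common refinement of two algebra sets. -/
lemma UAlg_pair {W W' : Set (RootedGraph Δ)} (h : W ∈ UAlg Δ) (h' : W' ∈ UAlg Δ) :
    ∃ (R : ℕ) (T T' : Set (JJ Δ R)), (∀ j ∈ T, isRep Δ R j) ∧ (∀ j ∈ T', isRep Δ R j) ∧
      W = EvU Δ R T ∧ W' = EvU Δ R T' := by
  obtain ⟨R, T, -, hT, rfl⟩ := UAlg_refine Δ h 0
  obtain ⟨R', T', hle, hT', rfl⟩ := UAlg_refine Δ h' R
  refine ⟨R', {j' : JJ Δ R' | isRep Δ R' j' ∧ ∃ j ∈ T, typed Δ R j j'.2.1 j'.2.2}, T',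
    fun j hj => hj.1, hT', EvU_refine Δ hle T, rfl⟩

lemma EvU_union (R : ℕ) (T T' : Set (JJ Δ R)) :
    EvU Δ R T ∪ EvU Δ R T' = EvU Δ R (T ∪ T') := by
  ext X
  simp only [EvU, Set.mem_union, Set.mem_setOf_eq, Set.mem_union]
  constructor
  · rintro (⟨j, hj, hjj⟩ | ⟨j, hj, hjj⟩)
    exacts [⟨j, Or.inl hj, hjj⟩, ⟨j, Or.inr hj, hjj⟩]
  · rintro ⟨j, hj | hj, hjj⟩
    exacts [Or.inl ⟨j, hj, hjj⟩, Or.inr ⟨j, hj, hjj⟩]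

lemma EvU_inter (R : ℕ) (T T' : Set (JJ Δ R)) (hT : ∀ j ∈ T, isRep Δ R j)
    (hT' : ∀ j ∈ T', isRep Δ R j) :
    EvU Δ R T ∩ EvU Δ R T' = EvU Δ R (T ∩ T') := by
  ext X
  simp only [EvU, Set.mem_inter_iff, Set.mem_setOf_eq]
  constructor
  · rintro ⟨⟨j, hj, hjj⟩, ⟨j', hj', hjj'⟩⟩
    have : j = j' := typed_unique Δ (hT j hj) (hT' j' hj') hjj hjj'
    exact ⟨j, ⟨hj, this ▸ hj'⟩, hjj⟩
  · rintro ⟨j, ⟨hj, hj'⟩, hjj⟩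
    exact ⟨⟨j, hj, hjj⟩, ⟨j, hj', hjj⟩⟩

lemma UAlg_union {W W' : Set (RootedGraph Δ)} (h : W ∈ UAlg Δ) (h' : W' ∈ UAlg Δ) :
    W ∪ W' ∈ UAlg Δ := by
  obtain ⟨R, T, T', hT, hT', rfl, rfl⟩ := UAlg_pair Δ h h'
  exact ⟨R, T ∪ T', by rintro j (hj | hj); exacts [hT j hj, hT' j hj],
    EvU_union Δ R T T'⟩

lemma UAlg_inter {W W' : Set (RootedGraph Δ)} (h : W ∈ UAlg Δ) (h' : W' ∈ UAlg Δ) :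
    W ∩ W' ∈ UAlg Δ := by
  obtain ⟨R, T, T', hT, hT', rfl, rfl⟩ := UAlg_pair Δ h h'
  exact ⟨R, T ∩ T', fun j hj => hT j hj.1, EvU_inter Δ R T T' hT hT'⟩

end RIT

/-- Local weak convergence of a sequence of finite graphs `G n` to the law `μ` of a random
rooted graph: for every radius `R` and every finite rooted graph `(H,r)`, the probability that
the `R`-ball around a uniform random vertex of `G n` is isomorphic to `(H,r)` converges to the
`μ`-probability that the `R`-ball around the root is isomorphic to `(H,r)`. -/
def LocalWeakLimit {Δ : ℕ} {V : ℕ → Type*} [∀ n, Fintype (V n)]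
    (G : ∀ n, SimpleGraph (V n)) (μ : Measure (RootedGraph Δ)) : Prop :=
  ∀ (R m : ℕ) (H : SimpleGraph (Fin m)) (r : Fin m),
    Tendsto
      (fun n => (Nat.card {v : V n // BallsIso (G n) v H r R} : ℝ) / (Fintype.card (V n)))
      atTop (nhds (μ {X : RootedGraph Δ | BallsIso X.graph X.root H r R}).toReal)

namespace RIT

variable (Δ : ℕ)

lemma measure_EvU (μ : Measure (RootedGraph Δ)) (R : ℕ) (T : Set (JJ Δ R))
    (hT : ∀ j ∈ T, isRep Δ R j) :
    μ (EvU Δ R T) = ∑ j ∈ (Set.toFinite T).toFinset, μ (Ev Δ R j) := by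
  rw [EvU_eq_biUnion]
  refine measure_biUnion_finset ?_ (fun j _ => Ev_measurable Δ R j)
  intro j hj j' hj' hne
  rw [Set.Finite.coe_toFinset] at hj hj'
  exact atom_disjoint Δ (hT j hj) (hT j' hj') hne

/-- The main convergence lemma for unions of atoms. -/
lemma tendsto_EvU {V : ℕ → Type} [∀ n, Fintype (V n)] (G : ∀ n, SimpleGraph (V n))
    (μ : Measure (RootedGraph Δ)) [IsProbabilityMeasure μ] (hlwc : LocalWeakLimit G μ)
    (R : ℕ) (T : Set (JJ Δ R)) (hT : ∀ j ∈ T, isRep Δ R j) :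
    Tendsto (fun n => (({v : V n | ∃ j ∈ T, typed Δ R j (G n) v}.ncard : ℝ)) /
        (Fintype.card (V n))) atTop (nhds (μ (EvU Δ R T)).toReal) := by
  classical
  have hcount : ∀ n, {v : V n | ∃ j ∈ T, typed Δ R j (G n) v}.ncard
      = ∑ j ∈ (Set.toFinite T).toFinset, {v : V n | typed Δ R j (G n) v}.ncard := by
    intro n
    have hset : {v : V n | ∃ j ∈ T, typed Δ R j (G n) v}
        = ⋃ j ∈ (Set.toFinite T).toFinset, {v : V n | typed Δ R j (G n) v} := by
      ext v; simp [Set.Finite.mem_toFinset]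
    rw [hset]
    refine ncard_biUnion_eq _ _ (fun j _ => Set.toFinite _) ?_
    intro j hj j' hj' hne
    rw [Set.Finite.mem_toFinset] at hj hj'
    rw [Set.disjoint_left]
    rintro v hv hv'
    exact hne (typed_unique Δ (hT j hj) (hT j' hj') hv hv')
  have hfun : ∀ n, (({v : V n | ∃ j ∈ T, typed Δ R j (G n) v}.ncard : ℝ)) /
      (Fintype.card (V n)) = ∑ j ∈ (Set.toFinite T).toFinset,
        (({v : V n | typed Δ R j (G n) v}.ncard : ℝ)) / (Fintype.card (V n)) := by
    intro n
    rw [hcount n]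
    push_cast
    rw [Finset.sum_div]
  have hlim : ∀ j ∈ (Set.toFinite T).toFinset,
      Tendsto (fun n => (({v : V n | typed Δ R j (G n) v}.ncard : ℝ)) / (Fintype.card (V n)))
        atTop (nhds ((μ (Ev Δ R j)).toReal)) := by
    intro j _
    have := hlwc R j.1.1 j.2.1 j.2.2
    have heq : ∀ n, (Nat.card {v : V n // BallsIso (G n) v j.2.1 j.2.2 R} : ℝ)
        = ({v : V n | typed Δ R j (G n) v}.ncard : ℝ) := by
      intro n
      norm_cast
    simp only [heq] at this
    exact this
  have := tendsto_finset_sum ((Set.toFinite T).toFinset) hlim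
  rw [show ∑ j ∈ (Set.toFinite T).toFinset, (μ (Ev Δ R j)).toReal
      = (μ (EvU Δ R T)).toReal by
    rw [measure_EvU Δ μ R T hT, ENNReal.toReal_sum (fun j _ => measure_ne_top μ _)]]
      at this
  refine this.congr ?_
  intro n
  exact (hfun n).symm

end RIT

/-- The number of edges of `G` with one endpoint in `A` and the other outside `A`. -/
noncomputable def edgeCut {V : Type*} (G : SimpleGraph V) (A : Set V) : ℕ :=
  {e ∈ G.edgeSet | ∃ u ∈ A, ∃ v ∉ A, e = s(u, v)}.ncard

/-- The graph `G` has Cheeger constant (edge-isoperimetric number) at least `c`: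
`|E(A, V ∖ A)| ≥ c·|A|` for every `A` with `0 < |A| ≤ |V|/2`. -/
def CheegerLB {V : Type*} [Fintype V] (G : SimpleGraph V) (c : ℝ) : Prop :=
  ∀ A : Set V, A.Nonempty → (A.ncard : ℝ) ≤ (Fintype.card V : ℝ) / 2 →
    c * A.ncard ≤ edgeCut G A

/-- Rerooting a rooted graph at another vertex. -/
def RootedGraph.reroot {Δ : ℕ} (X : RootedGraph Δ) (v : X.verts) : RootedGraph Δ :=
  { X with root := v }


namespace RIT

variable (Δ : ℕ)

/-- countable unions of algebra sets. -/
def USig : Set (Set (RootedGraph Δ)) :=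
  {U | ∃ C : ℕ → Set (RootedGraph Δ), (∀ k, C k ∈ UAlg Δ) ∧ U = ⋃ k, C k}

lemma UAlg_subset_USig {W : Set (RootedGraph Δ)} (h : W ∈ UAlg Δ) : W ∈ USig Δ :=
  ⟨fun _ => W, fun _ => h, (Set.iUnion_const W).symm⟩

lemma USig_measurable {U : Set (RootedGraph Δ)} (h : U ∈ USig Δ) : MeasurableSet U := by
  obtain ⟨C, hC, rfl⟩ := h
  exact MeasurableSet.iUnion (fun k => UAlg_measurable Δ (hC k))

lemma USig_iUnion {U : ℕ → Set (RootedGraph Δ)} (h : ∀ k, U k ∈ USig Δ) :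
    (⋃ k, U k) ∈ USig Δ := by
  choose C hC hU using h
  refine ⟨fun n => C (Nat.unpair n).1 (Nat.unpair n).2, fun n => hC _ _, ?_⟩
  ext X
  simp only [Set.mem_iUnion]
  constructor
  · rintro ⟨k, hk⟩
    rw [hU k] at hk
    obtain ⟨l, hl⟩ := Set.mem_iUnion.mp hk
    exact ⟨Nat.pair k l, by simpa [Nat.unpair_pair] using hl⟩
  · rintro ⟨n, hn⟩
    exact ⟨(Nat.unpair n).1, by rw [hU]; exact Set.mem_iUnion.mpr ⟨_, hn⟩⟩

lemma USig_inter {U U' : Set (RootedGraph Δ)} (h : U ∈ USig Δ) (h' : U' ∈ USig Δ) :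
    U ∩ U' ∈ USig Δ := by
  obtain ⟨C, hC, rfl⟩ := h
  obtain ⟨C', hC', rfl⟩ := h'
  refine ⟨fun n => C (Nat.unpair n).1 ∩ C' (Nat.unpair n).2,
    fun n => UAlg_inter Δ (hC _) (hC' _), ?_⟩
  ext X
  simp only [Set.mem_inter_iff, Set.mem_iUnion]
  constructor
  · rintro ⟨⟨k, hk⟩, ⟨l, hl⟩⟩
    exact ⟨Nat.pair k l, by simpa [Nat.unpair_pair] using ⟨hk, hl⟩⟩
  · rintro ⟨n, hn, hn'⟩
    exact ⟨⟨_, hn⟩, ⟨_, hn'⟩⟩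

/-- generators belong to the algebra. -/
lemma gen_mem_UAlg {t : Set (RootedGraph Δ)}
    (ht : t ∈ {S | ∃ (m : ℕ) (H : SimpleGraph (Fin m)) (r : Fin m) (R : ℕ),
      S = {X : RootedGraph Δ | BallsIso X.graph X.root H r R}}) : t ∈ UAlg Δ := by
  obtain ⟨m, H, r, R, rfl⟩ := ht
  refine ⟨R, {j | isRep Δ R j ∧ BallsIso j.2.1 j.2.2 H r R}, fun j hj => hj.1, ?_⟩
  ext X
  simp only [Set.mem_setOf_eq, EvU]
  constructor
  · intro hX
    obtain ⟨j, hjrep, hj⟩ := exists_atom Δ R X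
    exact ⟨j, ⟨hjrep, (BallsIso.symm hj).trans hX⟩, hj⟩
  · rintro ⟨j, ⟨hjrep, hjH⟩, hj⟩
    exact BallsIso.trans hj hjH

/-- two-sided approximability predicate. -/
def PP (μ : Measure (RootedGraph Δ)) (A : Set (RootedGraph Δ)) : Prop :=
  (∀ ε : ℝ≥0∞, ε ≠ 0 → ∃ U ∈ USig Δ, A ⊆ U ∧ μ U ≤ μ A + ε) ∧
  (∀ ε : ℝ≥0∞, ε ≠ 0 → ∃ U ∈ USig Δ, Aᶜ ⊆ U ∧ μ U ≤ μ Aᶜ + ε)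

lemma PP_of_UAlg (μ : Measure (RootedGraph Δ)) {W : Set (RootedGraph Δ)}
    (h : W ∈ UAlg Δ) : PP Δ μ W := by
  constructor
  · intro ε _
    exact ⟨W, UAlg_subset_USig Δ h, subset_rfl, le_self_add⟩
  · intro ε _
    exact ⟨Wᶜ, UAlg_subset_USig Δ (UAlg_compl Δ h), subset_rfl, le_self_add⟩

/-- **Outer regularity** with respect to countable unions of atoms. -/
theorem regularity (μ : Measure (RootedGraph Δ)) [IsFiniteMeasure μ]
    {A : Set (RootedGraph Δ)} (hA : MeasurableSet A) {ε : ℝ≥0∞} (hε : ε ≠ 0) :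
    ∃ U ∈ USig Δ, A ⊆ U ∧ μ U ≤ μ A + ε := by
  revert ε
  suffices h : PP Δ μ A by exact fun {ε} hε => h.1 ε hε
  induction A, hA using MeasurableSpace.generateFrom_induction with
  | hC t ht _ => exact PP_of_UAlg Δ μ (gen_mem_UAlg Δ ht)
  | empty => exact PP_of_UAlg Δ μ (UAlg_empty Δ)
  | compl t ht hp => exact ⟨fun ε hε => hp.2 ε hε, fun ε hε => by
      rw [compl_compl]; exact hp.1 ε hε⟩
  | iUnion s hs hp =>
      constructor
      · -- outer approximation of the union
        intro ε hε
        obtain ⟨ε', hε'pos, hε'sum⟩ := ENNReal.exists_pos_sum_of_countable hε ℕ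
        have hU : ∀ k, ∃ U ∈ USig Δ, s k ⊆ U ∧ μ U ≤ μ (s k) + ε' k := by
          intro k
          exact (hp k).1 (ε' k) (by exact_mod_cast (hε'pos k).ne')
        choose U hUSig hsub hle using hU
        refine ⟨⋃ k, U k, USig_iUnion Δ hUSig, Set.iUnion_mono hsub, ?_⟩
        have hsubset : (⋃ k, U k) ⊆ (⋃ k, s k) ∪ ⋃ k, (U k \ s k) := by
          intro x hx
          obtain ⟨k, hk⟩ := Set.mem_iUnion.mp hx
          by_cases hxs : x ∈ s k
          · exact Or.inl (Set.mem_iUnion.mpr ⟨k, hxs⟩)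
          · exact Or.inr (Set.mem_iUnion.mpr ⟨k, hk, hxs⟩)
        calc μ (⋃ k, U k) ≤ μ ((⋃ k, s k) ∪ ⋃ k, (U k \ s k)) := measure_mono hsubset
        _ ≤ μ (⋃ k, s k) + μ (⋃ k, (U k \ s k)) := measure_union_le _ _
        _ ≤ μ (⋃ k, s k) + ∑' k, μ (U k \ s k) := by
            exact add_le_add le_rfl (measure_iUnion_le _)
        _ ≤ μ (⋃ k, s k) + ∑' k, (ε' k : ℝ≥0∞) := by
            refine add_le_add le_rfl (ENNReal.tsum_le_tsum (fun k => ?_))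
            rw [measure_diff (hsub k) (hs k).nullMeasurableSet (measure_ne_top μ _)]
            exact tsub_le_iff_right.mpr (by rw [add_comm]; exact hle k)
        _ ≤ μ (⋃ k, s k) + ε := add_le_add le_rfl hε'sum.le
      · -- outer approximation of the complement of the union
        intro ε hε
        have hhalf : (ε / 2) ≠ 0 := by
          simp only [ne_eq, ENNReal.div_eq_zero_iff]
          push_neg
          exact ⟨hε, by norm_num⟩
        obtain ⟨ε', hε'pos, hε'sum⟩ := ENNReal.exists_pos_sum_of_countable hhalf ℕ
        have hU : ∀ k, ∃ U ∈ USig Δ, (s k)ᶜ ⊆ U ∧ μ U ≤ μ (s k)ᶜ + ε' k := by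
          intro k
          exact (hp k).2 (ε' k) (by exact_mod_cast (hε'pos k).ne')
        choose U hUSig hsub hle using hU
        -- the decreasing finite intersections
        set sK : ℕ → Set (RootedGraph Δ) := fun K => ⋂ k ∈ Finset.range (K+1), (s k)ᶜ
          with hsK
        have hanti : Antitone sK := by
          intro K K' hKK' x hx
          simp only [hsK, Set.mem_iInter, Finset.mem_range] at hx ⊢
          intro k hk
          exact hx k (by omega)
        have hiInter : ⋂ K, sK K = (⋃ k, s k)ᶜ := by
          ext x
          simp only [Set.mem_iInter, Set.compl_iUnion, hsK, Finset.mem_range]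
          constructor
          · intro h k
            exact h k k (by omega)
          · intro h K k _
            exact h k
        have htend : Tendsto (fun K => μ (sK K)) atTop (nhds (μ (⋃ k, s k)ᶜ)) := by
          have := tendsto_measure_iInter_atTop (μ := μ)
            (s := sK) (fun K => ((MeasurableSet.biInter (Set.to_countable _)
              (fun k _ => (hs k).compl)).nullMeasurableSet))
            hanti ⟨0, measure_ne_top μ _⟩
          rw [hiInter] at this
          exact this
        have hlt : μ (⋃ k, s k)ᶜ < μ (⋃ k, s k)ᶜ + ε / 2 :=
          ENNReal.lt_add_right (measure_ne_top μ _) hhalf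
        obtain ⟨K, hK⟩ := (htend.eventually_lt_const hlt).exists
        -- the corresponding finite intersection of the covers
        have hWUSig : ∀ K : ℕ, (⋂ k ∈ Finset.range (K+1), U k) ∈ USig Δ := by
          intro K
          induction K with
          | zero =>
              convert hUSig 0 using 1
              simp
          | succ K ih =>
              have : ⋂ k ∈ Finset.range (K+2), U k
                  = (⋂ k ∈ Finset.range (K+1), U k) ∩ U (K+1) := by
                rw [Finset.range_add_one, Finset.set_biInter_insert]
                exact Set.inter_comm _ _
              rw [this]
              exact USig_inter Δ ih (hUSig (K+1))
        refine ⟨⋂ k ∈ Finset.range (K+1), U k, hWUSig K, ?_, ?_⟩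
        · intro x hx
          refine Set.mem_biInter (fun k _ => hsub k ?_)
          simp only [Set.compl_iUnion, Set.mem_iInter] at hx
          exact hx k
        · have hsplit : (⋂ k ∈ Finset.range (K+1), U k) ⊆
              sK K ∪ ⋃ k ∈ Finset.range (K+1), (U k \ (s k)ᶜ) := by
            intro x hx
            by_cases hxs : x ∈ sK K
            · exact Or.inl hxs
            · simp only [hsK, Set.mem_iInter, not_forall] at hxs
              obtain ⟨k, hk, hxk⟩ := hxs
              refine Or.inr (Set.mem_biUnion hk ⟨?_, hxk⟩)
              exact Set.mem_iInter₂.mp hx k hk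
          calc μ (⋂ k ∈ Finset.range (K+1), U k)
              ≤ μ (sK K) + μ (⋃ k ∈ Finset.range (K+1), (U k \ (s k)ᶜ)) := by
                exact le_trans (measure_mono hsplit) (measure_union_le _ _)
          _ ≤ μ (sK K) + ∑ k ∈ Finset.range (K+1), μ (U k \ (s k)ᶜ) := by
                refine add_le_add le_rfl ?_
                refine le_trans (measure_biUnion_finset_le _ _) le_rfl
          _ ≤ μ (sK K) + ∑ k ∈ Finset.range (K+1), (ε' k : ℝ≥0∞) := by
                refine add_le_add le_rfl (Finset.sum_le_sum (fun k _ => ?_))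
                rw [measure_diff (hsub k) ((hs k).compl).nullMeasurableSet
                  (measure_ne_top μ _)]
                exact tsub_le_iff_right.mpr (by rw [add_comm]; exact hle k)
          _ ≤ (μ (⋃ k, s k)ᶜ + ε / 2) + ε / 2 := by
                refine add_le_add hK.le (le_trans (ENNReal.sum_le_tsum _) hε'sum.le)
          _ = μ (⋃ k, s k)ᶜ + ε := by
                rw [add_assoc, ENNReal.add_halves]

end RIT

namespace RIT

variable (Δ : ℕ)

/-- finite approximation by an algebra set. -/
lemma approx (μ : Measure (RootedGraph Δ)) [IsFiniteMeasure μ]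
    {A : Set (RootedGraph Δ)} (hA : MeasurableSet A) {ε : ℝ≥0∞} (hε : ε ≠ 0) :
    ∃ B ∈ UAlg Δ, μ (A \ B) ≤ ε ∧ μ (B \ A) ≤ ε := by
  obtain ⟨U, hUSig, hAU, hUle⟩ := regularity Δ μ hA hε
  obtain ⟨C, hC, rfl⟩ := hUSig
  set P : ℕ → Set (RootedGraph Δ) := fun K => ⋃ k ∈ Finset.range (K+1), C k with hP
  have hPalg : ∀ K, P K ∈ UAlg Δ := by
    intro K
    induction K with
    | zero =>
        have : P 0 = C 0 := by simp [hP]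
        rw [this]; exact hC 0
    | succ K ih =>
        have : P (K+1) = P K ∪ C (K+1) := by
          simp only [hP]
          rw [Finset.range_add_one, Finset.set_biUnion_insert]
          exact Set.union_comm _ _
        rw [this]; exact UAlg_union Δ ih (hC (K+1))
  have hUP : ∀ K, P K ⊆ ⋃ k, C k := by
    intro K x hx
    obtain ⟨k, _, hk⟩ := Set.mem_iUnion₂.mp hx
    exact Set.mem_iUnion.mpr ⟨k, hk⟩
  have hanti : Antitone (fun K => (⋃ k, C k) \ P K) := by
    intro K K' hKK' x hx
    refine ⟨hx.1, fun hxP => hx.2 ?_⟩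
    simp only [hP, Set.mem_iUnion, Finset.mem_range] at hxP ⊢
    obtain ⟨k, hk, hxk⟩ := hxP
    exact ⟨k, by omega, hxk⟩
  have hiInter : ⋂ K, ((⋃ k, C k) \ P K) = ∅ := by
    ext x
    simp only [Set.mem_iInter, Set.mem_empty_iff_false, iff_false]
    intro h
    obtain ⟨k, hk⟩ := Set.mem_iUnion.mp ((h 0).1)
    exact (h k).2 (by
      simp only [hP, Set.mem_iUnion, Finset.mem_range]
      exact ⟨k, by omega, hk⟩)
  have htend : Tendsto (fun K => μ ((⋃ k, C k) \ P K)) atTop (nhds 0) := by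
    have := tendsto_measure_iInter_atTop (μ := μ)
      (s := fun K => (⋃ k, C k) \ P K)
      (fun K => ((MeasurableSet.iUnion (fun k => UAlg_measurable Δ (hC k))).diff
        (UAlg_measurable Δ (hPalg K))).nullMeasurableSet)
      hanti ⟨0, measure_ne_top μ _⟩
    rw [hiInter, measure_empty] at this
    exact this
  have hεpos : (0 : ℝ≥0∞) < ε := pos_iff_ne_zero.mpr hε
  obtain ⟨K, hK⟩ := (htend.eventually_lt_const hεpos).exists
  refine ⟨P K, hPalg K, ?_, ?_⟩
  · exact le_trans (measure_mono (Set.diff_subset_diff_left hAU)) hK.le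
  · refine le_trans (measure_mono (Set.diff_subset_diff_left (hUP K))) ?_
    rw [measure_diff hAU hA.nullMeasurableSet (measure_ne_top μ _)]
    exact tsub_le_iff_right.mpr (by rw [add_comm]; exact hUle)

/-- neighbor-of-root counting in a finite graph. -/
lemma count_nbr {V : Type*} [Fintype V] (G : SimpleGraph V)
    (hdeg : ∀ v, (G.neighborSet v).ncard ≤ Δ) (S : Set V) :
    {v | ∃ w, G.Adj v w ∧ w ∈ S}.ncard ≤ Δ * S.ncard := by
  classical
  have hsub : {v | ∃ w, G.Adj v w ∧ w ∈ S} ⊆ ⋃ w ∈ S.toFinset, G.neighborSet w := by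
    rintro v ⟨w, hadj, hw⟩
    exact Set.mem_biUnion (Set.mem_toFinset.mpr hw) hadj.symm
  calc {v | ∃ w, G.Adj v w ∧ w ∈ S}.ncard
      ≤ (⋃ w ∈ S.toFinset, G.neighborSet w).ncard :=
        Set.ncard_le_ncard hsub (Set.toFinite _)
  _ ≤ ∑ w ∈ S.toFinset, (G.neighborSet w).ncard :=
        ncard_biUnion_le _ _ (fun w _ => Set.toFinite _)
  _ ≤ ∑ w ∈ S.toFinset, Δ := Finset.sum_le_sum (fun w _ => hdeg w)
  _ = S.toFinset.card * Δ := by simp [Finset.sum_const, Nat.mul_comm]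
  _ = Δ * S.ncard := by rw [Set.ncard_eq_toFinset_card' S]; ring

/-- locality of the neighbor-type predicate. -/
lemma phi_local {R : ℕ} (T : Set (JJ Δ R)) {V₁ V₂ : Type*} {G₁ : SimpleGraph V₁} {o₁ : V₁}
    {G₂ : SimpleGraph V₂} {o₂ : V₂} (h : BallsIso G₁ o₁ G₂ o₂ (R+1))
    (hw : ∃ w, G₁.Adj o₁ w ∧ ∃ j ∈ T, typed Δ R j G₁ w) :
    ∃ w', G₂.Adj o₂ w' ∧ ∃ j ∈ T, typed Δ R j G₂ w' := by
  obtain ⟨w, hadj, j, hjT, hj⟩ := hw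
  obtain ⟨w', hadj', hball⟩ := h.neighbor hadj
  exact ⟨w', hadj', j, hjT, hball.symm.trans hj⟩

/-- the types whose root has a neighbor of type in `T`. -/
def TN {R : ℕ} (T : Set (JJ Δ R)) : Set (JJ Δ (R+1)) :=
  {j' | isRep Δ (R+1) j' ∧ ∃ w, j'.2.1.Adj j'.2.2 w ∧ ∃ j ∈ T, typed Δ R j j'.2.1 w}

lemma pred_iff_TN {R : ℕ} (T : Set (JJ Δ R)) {V : Type*} (G : SimpleGraph V) (v : V)
    (hfin : ∀ u, (G.neighborSet u).Finite) (hdeg : ∀ u, (G.neighborSet u).ncard ≤ Δ) :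
    (∃ w, G.Adj v w ∧ ∃ j ∈ T, typed Δ R j G w) ↔
      (∃ j' ∈ TN Δ T, typed Δ (R+1) j' G v) := by
  constructor
  · intro hw
    obtain ⟨j', hrep, hj'⟩ := typed_exists Δ G v (R+1) hfin hdeg
    exact ⟨j', ⟨hrep, phi_local Δ T hj' hw⟩, hj'⟩
  · rintro ⟨j', ⟨hrep, hphi⟩, hj'⟩
    exact phi_local Δ T hj'.symm hphi

/-- The event that some neighbor of the root lies in `W` after rerooting. -/
def NB (W : Set (RootedGraph Δ)) : Set (RootedGraph Δ) :=
  {X | ∃ w : X.verts, X.graph.Adj X.root w ∧ X.reroot w ∈ W}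

lemma NB_mono {W W' : Set (RootedGraph Δ)} (h : W ⊆ W') : NB Δ W ⊆ NB Δ W' := by
  rintro X ⟨w, hadj, hw⟩
  exact ⟨w, hadj, h hw⟩

lemma NB_iUnion (C : ℕ → Set (RootedGraph Δ)) : NB Δ (⋃ k, C k) = ⋃ k, NB Δ (C k) := by
  ext X
  simp only [NB, Set.mem_setOf_eq, Set.mem_iUnion]
  constructor
  · rintro ⟨w, hadj, k, hk⟩
    exact ⟨k, w, hadj, hk⟩
  · rintro ⟨k, w, hadj, hk⟩
    exact ⟨w, hadj, k, hk⟩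

lemma NB_EvU {R : ℕ} (T : Set (JJ Δ R)) :
    NB Δ (EvU Δ R T) = EvU Δ (R+1) (TN Δ T) := by
  ext X
  have : X ∈ NB Δ (EvU Δ R T) ↔
      ∃ w : X.verts, X.graph.Adj X.root w ∧ ∃ j ∈ T, typed Δ R j X.graph w := Iff.rfl
  rw [this]
  exact pred_iff_TN Δ T X.graph X.root X.locFin X.degBdd

end RIT

namespace RIT

variable (Δ : ℕ)

section Context

variable {V : ℕ → Type} [∀ n, Fintype (V n)] (G : ∀ n, SimpleGraph (V n))
  (μ : Measure (RootedGraph Δ)) [IsProbabilityMeasure μ]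

lemma NB_measure_le_alg (hdeg : ∀ n (v : V n), ((G n).neighborSet v).ncard ≤ Δ)
    (hlwc : LocalWeakLimit G μ) {R : ℕ} (T : Set (JJ Δ R)) (hT : ∀ j ∈ T, isRep Δ R j) :
    μ (NB Δ (EvU Δ R T)) ≤ (Δ : ℝ≥0∞) * μ (EvU Δ R T) := by
  have hTN : ∀ j' ∈ TN Δ T, isRep Δ (R+1) j' := fun j' h => h.1
  have l1 := tendsto_EvU Δ G μ hlwc (R+1) (TN Δ T) hTN
  have l2 := (tendsto_EvU Δ G μ hlwc R T hT).const_mul (Δ : ℝ)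
  have hineq : ∀ n, ({v : V n | ∃ j ∈ TN Δ T, typed Δ (R+1) j (G n) v}.ncard : ℝ) /
      (Fintype.card (V n)) ≤ (Δ : ℝ) * (({v : V n | ∃ j ∈ T, typed Δ R j (G n) v}.ncard : ℝ) /
      (Fintype.card (V n))) := by
    intro n
    have hseteq : {v : V n | ∃ j' ∈ TN Δ T, typed Δ (R+1) j' (G n) v}
        = {v : V n | ∃ w, (G n).Adj v w ∧ w ∈ {w : V n | ∃ j ∈ T, typed Δ R j (G n) w}} := by
      ext v
      exact (pred_iff_TN Δ T (G n) v (fun u => Set.toFinite _) (hdeg n)).symm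
    rw [hseteq]
    have hcount' : ({v : V n | ∃ w, (G n).Adj v w ∧
        w ∈ {w : V n | ∃ j ∈ T, typed Δ R j (G n) w}}.ncard : ℝ)
        ≤ (Δ : ℝ) * ({w : V n | ∃ j ∈ T, typed Δ R j (G n) w}.ncard : ℝ) := by
      exact_mod_cast count_nbr Δ (G n) (hdeg n) {w : V n | ∃ j ∈ T, typed Δ R j (G n) w}
    rw [mul_div_assoc']
    exact div_le_div_of_nonneg_right hcount' (by positivity)
  have key := le_of_tendsto_of_tendsto' l1 l2 hineq
  rw [NB_EvU]
  refine (ENNReal.toReal_le_toReal (measure_ne_top μ _)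
    (ENNReal.mul_ne_top (by simp) (measure_ne_top μ _))).mp ?_
  rw [ENNReal.toReal_mul]
  simpa using key

lemma NB_measure_le (hdeg : ∀ n (v : V n), ((G n).neighborSet v).ncard ≤ Δ)
    (hlwc : LocalWeakLimit G μ) {W : Set (RootedGraph Δ)} (hW : MeasurableSet W)
    {ε : ℝ≥0∞} (hε : ε ≠ 0) :
    μ (NB Δ W) ≤ (Δ : ℝ≥0∞) * (μ W + ε) := by
  obtain ⟨U, hUSig, hWU, hUle⟩ := regularity Δ μ hW hε
  obtain ⟨C, hC, hU⟩ := hUSig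
  subst hU
  have hpartial : ∀ k, (partialSups C k : Set (RootedGraph Δ)) ∈ UAlg Δ := by
    intro k
    induction k with
    | zero => rw [partialSups_zero]; exact hC 0
    | succ k ih =>
        rw [partialSups_add_one]
        show (partialSups C k : Set (RootedGraph Δ)) ∪ C (k+1) ∈ UAlg Δ
        exact UAlg_union Δ ih (hC (k+1))
  have hDalg : ∀ k, disjointed C k ∈ UAlg Δ := by
    intro k
    cases k with
    | zero => rw [disjointed_zero]; exact hC 0
    | succ k =>
        rw [disjointed_add_one, Set.diff_eq]
        exact UAlg_inter Δ (hC (k+1)) (UAlg_compl Δ (hpartial k))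
  calc μ (NB Δ W) ≤ μ (NB Δ (⋃ k, C k)) := measure_mono (NB_mono Δ hWU)
  _ = μ (NB Δ (⋃ k, disjointed C k)) := by rw [iUnion_disjointed]
  _ = μ (⋃ k, NB Δ (disjointed C k)) := by rw [NB_iUnion]
  _ ≤ ∑' k, μ (NB Δ (disjointed C k)) := measure_iUnion_le _
  _ ≤ ∑' k, (Δ : ℝ≥0∞) * μ (disjointed C k) := by
      refine ENNReal.tsum_le_tsum (fun k => ?_)
      obtain ⟨R, T, hT, hEq⟩ := hDalg k
      rw [hEq]
      exact NB_measure_le_alg Δ G μ hdeg hlwc T hT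
  _ = (Δ : ℝ≥0∞) * ∑' k, μ (disjointed C k) := ENNReal.tsum_mul_left
  _ = (Δ : ℝ≥0∞) * μ (⋃ k, disjointed C k) := by
      rw [measure_iUnion (disjoint_disjointed C) (fun k => UAlg_measurable Δ (hDalg k))]
  _ = (Δ : ℝ≥0∞) * μ (⋃ k, C k) := by rw [iUnion_disjointed]
  _ ≤ (Δ : ℝ≥0∞) * (μ W + ε) := mul_le_mul_right hUle _

end Context

end RIT

section Cut

variable {V : Type*} (G : SimpleGraph V)

lemma edgeCut_compl (A : Set V) : edgeCut G Aᶜ = edgeCut G A := by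
  unfold edgeCut
  congr 1
  ext e
  simp only [Set.mem_setOf_eq, Set.mem_compl_iff, not_not]
  constructor
  · rintro ⟨he, u, hu, v, hv, rfl⟩
    exact ⟨he, v, hv, u, hu, Sym2.eq_swap⟩
  · rintro ⟨he, u, hu, v, hv, rfl⟩
    exact ⟨he, v, hv, u, hu, Sym2.eq_swap⟩

lemma cheeger_min [Fintype V] {c : ℝ} (hch : CheegerLB G c) (hc : 0 ≤ c) (S : Set V) :
    c * min (S.ncard : ℝ) (Sᶜ.ncard : ℝ) ≤ (edgeCut G S : ℝ) := by
  have hsum : S.ncard + Sᶜ.ncard = Fintype.card V := by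
    rw [Set.ncard_add_ncard_compl]
    exact Nat.card_eq_fintype_card
  rcases le_total (S.ncard : ℝ) (Sᶜ.ncard : ℝ) with hle | hle
  · rw [min_eq_left hle]
    rcases Set.eq_empty_or_nonempty S with rfl | hne
    · simp [mul_nonneg hc]
    · refine hch S hne ?_
      have : (S.ncard : ℝ) + (Sᶜ.ncard : ℝ) = (Fintype.card V : ℝ) := by exact_mod_cast hsum
      linarith
  · rw [min_eq_right hle, ← edgeCut_compl G S]
    rcases Set.eq_empty_or_nonempty Sᶜ with hemp | hne
    · rw [hemp]; simp [mul_nonneg hc]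
    · refine hch Sᶜ hne ?_
      have : (S.ncard : ℝ) + (Sᶜ.ncard : ℝ) = (Fintype.card V : ℝ) := by exact_mod_cast hsum
      linarith

lemma edgeCut_le_boundary [Fintype V] {Δ : ℕ}
    (hdeg : ∀ v, (G.neighborSet v).ncard ≤ Δ) (S : Set V) :
    edgeCut G S ≤ Δ * {u | u ∈ S ∧ ∃ w, G.Adj u w ∧ w ∉ S}.ncard := by
  classical
  set D : Set V := {u | u ∈ S ∧ ∃ w, G.Adj u w ∧ w ∉ S} with hD
  have hsub : {e ∈ G.edgeSet | ∃ u ∈ S, ∃ v ∉ S, e = s(u, v)} ⊆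
      ⋃ u ∈ D.toFinset, (fun v => s(u, v)) '' (G.neighborSet u) := by
    rintro e ⟨he, u, hu, v, hv, rfl⟩
    have hadj : G.Adj u v := G.mem_edgeSet.mp he
    refine Set.mem_biUnion (Set.mem_toFinset.mpr ⟨hu, v, hadj, hv⟩) ?_
    exact ⟨v, hadj, rfl⟩
  calc edgeCut G S ≤ (⋃ u ∈ D.toFinset, (fun v => s(u, v)) '' (G.neighborSet u)).ncard :=
        Set.ncard_le_ncard hsub (Set.toFinite _)
  _ ≤ ∑ u ∈ D.toFinset, ((fun v => s(u, v)) '' (G.neighborSet u)).ncard :=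
        ncard_biUnion_le _ _ (fun u _ => Set.toFinite _)
  _ ≤ ∑ u ∈ D.toFinset, Δ := by
        refine Finset.sum_le_sum (fun u _ => le_trans (Set.ncard_image_le (Set.toFinite _))
          (hdeg u))
  _ = D.toFinset.card * Δ := by simp [Finset.sum_const, Nat.mul_comm]
  _ = Δ * D.ncard := by rw [Set.ncard_eq_toFinset_card' D]; ring

end Cut

namespace RIT

variable (Δ : ℕ)

/-- graph-side complement of a union of atoms. -/
lemma typed_compl {R : ℕ} (T : Set (JJ Δ R)) (hT : ∀ j ∈ T, isRep Δ R j) {V : Type*}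
    (G : SimpleGraph V) (v : V)
    (hfin : ∀ u, (G.neighborSet u).Finite) (hdeg : ∀ u, (G.neighborSet u).ncard ≤ Δ) :
    (∃ j ∈ ({j | isRep Δ R j} \ T), typed Δ R j G v) ↔ ¬ (∃ j ∈ T, typed Δ R j G v) := by
  obtain ⟨j0, hj0rep, hj0⟩ := typed_exists Δ G v R hfin hdeg
  constructor
  · rintro ⟨j, ⟨hjrep, hjT⟩, hj⟩ ⟨j', hj'T, hj'⟩
    exact hjT (typed_unique Δ hjrep (hT j' hj'T) hj hj' ▸ hj'T)
  · intro h
    exact ⟨j0, ⟨hj0rep, fun hj0T => h ⟨j0, hj0T, hj0⟩⟩, hj0⟩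

end RIT

lemma exists_const_of_dichotomy {Ω : Type*} [MeasurableSpace Ω] (μ : Measure Ω)
    [IsProbabilityMeasure μ] (f : Ω → ℝ) (hf : Measurable f)
    (hd : ∀ t : ℝ, μ {x | f x ≤ t} = 0 ∨ μ {x | f x ≤ t} = 1) :
    ∃ r : ℝ, μ {x | f x = r} = 1 := by
  classical
  set A : ℝ → Set Ω := fun t => {x | f x ≤ t} with hA
  have hAm : ∀ t, MeasurableSet (A t) := fun t => hf measurableSet_Iic
  have hmono : ∀ {s t : ℝ}, s ≤ t → A s ⊆ A t := fun h x hx => le_trans hx h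
  have hex1 : ∃ t : ℝ, μ (A t) = 1 := by
    by_contra h
    push_neg at h
    have h0 : ∀ t, μ (A t) = 0 := fun t => (hd t).resolve_right (h t)
    have huniv : ⋃ n : ℕ, A n = Set.univ := by
      ext x
      simp only [Set.mem_iUnion, Set.mem_univ, iff_true, hA, Set.mem_setOf_eq]
      obtain ⟨n, hn⟩ := exists_nat_ge (f x)
      exact ⟨n, hn⟩
    have hz : μ (Set.univ : Set Ω) = 0 := by
      rw [← huniv]
      exact le_antisymm (le_trans (measure_iUnion_le _) (by simp [h0])) zero_le
    simp [measure_univ] at hz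
  have hex0 : ∃ t : ℝ, μ (A t) = 0 := by
    by_contra h
    push_neg at h
    have h1 : ∀ t, μ (A t) = 1 := fun t => (hd t).resolve_left (h t)
    have hempty : ⋂ n : ℕ, A (-(n:ℝ)) = ∅ := by
      ext x
      simp only [Set.mem_iInter, Set.mem_empty_iff_false, iff_false, not_forall, hA,
        Set.mem_setOf_eq, not_le]
      obtain ⟨n, hn⟩ := exists_nat_gt (-(f x))
      exact ⟨n, by linarith⟩
    have hanti : Antitone (fun n : ℕ => A (-(n:ℝ))) := by
      intro m n hmn
      exact hmono (neg_le_neg (Nat.cast_le.mpr hmn))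
    have htd := tendsto_measure_iInter_atTop (μ := μ) (s := fun n : ℕ => A (-(n:ℝ)))
      (fun n => (hAm _).nullMeasurableSet) hanti ⟨0, measure_ne_top μ _⟩
    rw [hempty] at htd
    simp only [measure_empty] at htd
    have hconst : (⇑μ ∘ fun n : ℕ => A (-(n:ℝ))) = fun _ => (1 : ℝ≥0∞) :=
      funext fun n => h1 _
    rw [hconst] at htd
    exact one_ne_zero (tendsto_nhds_unique tendsto_const_nhds htd)
  obtain ⟨t₀, ht₀⟩ := hex1
  set S := {t : ℝ | μ (A t) = 1} with hS
  have hSne : S.Nonempty := ⟨t₀, ht₀⟩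
  have hSbdd : BddBelow S := by
    obtain ⟨t₁, ht₁⟩ := hex0
    refine ⟨t₁, fun t ht => ?_⟩
    by_contra hlt
    push_neg at hlt
    have hmm : μ (A t) ≤ μ (A t₁) := measure_mono (hmono hlt.le)
    rw [ht, ht₁] at hmm
    norm_num at hmm
  set r := sInf S with hr
  have hupper : ∀ δ : ℝ, 0 < δ → μ (A (r + δ)) = 1 := by
    intro δ hδ
    obtain ⟨t, htS, htlt⟩ := exists_lt_of_csInf_lt hSne
      (show sInf S < r + δ by rw [← hr]; linarith)
    refine le_antisymm prob_le_one ?_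
    rw [← htS]
    exact measure_mono (hmono htlt.le)
  have hAr : μ (A r) = 1 := by
    have hcap : A r = ⋂ n : ℕ, A (r + 1/(n+1)) := by
      ext x
      constructor
      · intro hx
        refine Set.mem_iInter.mpr (fun n => hmono ?_ hx)
        have : (0:ℝ) < 1/((n:ℝ)+1) := by positivity
        linarith
      · intro hx
        have hall : ∀ n : ℕ, f x ≤ r + 1/(n+1) := fun n => Set.mem_iInter.mp hx n
        show f x ≤ r
        by_contra hgt
        push_neg at hgt
        obtain ⟨n, hn⟩ := exists_nat_one_div_lt (show (0:ℝ) < f x - r by linarith)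
        have := hall n
        have hn' : 1/((n:ℝ)+1) < f x - r := hn
        linarith
    rw [hcap]
    rw [← prob_compl_eq_zero_iff (MeasurableSet.iInter (fun n => hAm _))]
    rw [Set.compl_iInter]
    refine le_antisymm (le_trans (measure_iUnion_le _) ?_) zero_le
    have hzz : ∀ n : ℕ, μ (A (r + 1/(n+1)))ᶜ = 0 := by
      intro n
      rw [measure_compl (hAm _) (measure_ne_top μ _), hupper (1/(n+1)) (by positivity),
        measure_univ, tsub_self]
    exact le_of_eq (ENNReal.tsum_eq_zero.mpr (fun n => by simpa using hzz n))
  have hlow : μ {x | f x < r} = 0 := by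
    have hun : {x | f x < r} = ⋃ n : ℕ, A (r - 1/(n+1)) := by
      ext x
      simp only [Set.mem_setOf_eq, Set.mem_iUnion, hA]
      constructor
      · intro hx
        obtain ⟨n, hn⟩ := exists_nat_one_div_lt (show (0:ℝ) < r - f x by linarith)
        have hn' : 1/((n:ℝ)+1) < r - f x := hn
        exact ⟨n, by push_cast; linarith⟩
      · rintro ⟨n, hn⟩
        have : (0:ℝ) < 1/((n:ℝ)+1) := by positivity
        have hn' : f x ≤ r - 1/((n:ℝ)+1) := by exact_mod_cast hn
        linarith
    rw [hun]
    refine le_antisymm (le_trans (measure_iUnion_le _) ?_) zero_le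
    have hzz : ∀ n : ℕ, μ (A (r - 1/(n+1))) = 0 := by
      intro n
      rcases hd (r - 1/(n+1)) with h0 | h1
      · exact h0
      · exfalso
        have : (r - 1/((n:ℝ)+1)) ∈ S := h1
        have hle := csInf_le hSbdd this
        rw [← hr] at hle
        have : (0:ℝ) < 1/((n:ℝ)+1) := by positivity
        linarith
    exact le_of_eq (ENNReal.tsum_eq_zero.mpr (fun n => by simpa using hzz n))
  refine ⟨r, le_antisymm prob_le_one ?_⟩
  have hsplit : A r ⊆ {x | f x = r} ∪ {x | f x < r} := by
    intro x hx
    rcases lt_or_eq_of_le (show f x ≤ r from hx) with h | h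
    · exact Or.inr h
    · exact Or.inl h
  calc (1:ℝ≥0∞) = μ (A r) := hAr.symm
  _ ≤ μ ({x | f x = r} ∪ {x | f x < r}) := measure_mono hsplit
  _ ≤ μ {x | f x = r} + μ {x | f x < r} := measure_union_le _ _
  _ = μ {x | f x = r} := by rw [hlow, add_zero]

/-- **Root-invariance transfer.**  Under the hypotheses of the main theorem, every measurable
root-invariant function `f` on rooted graphs is `μ`-almost surely constant. -/
theorem root_invariant_function_constant (Δ : ℕ) (c : ℝ) (hc : 0 < c)
    {V : ℕ → Type} [∀ n, Fintype (V n)] (G : ∀ n, SimpleGraph (V n))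
    (hcheeger : ∀ n, CheegerLB (G n) c)
    (hdeg : ∀ n (v : V n), ((G n).neighborSet v).ncard ≤ Δ)
    (μ : Measure (RootedGraph Δ)) [IsProbabilityMeasure μ]
    (hlwc : LocalWeakLimit G μ)
    (hinf : μ {X : RootedGraph Δ | X.verts.Infinite} = 1)
    (f : RootedGraph Δ → ℝ) (hf : Measurable f)
    (hinv : ∀ (X : RootedGraph Δ) (v : X.verts), f (X.reroot v) = f X) :
    ∃ r : ℝ, μ {X : RootedGraph Δ | f X = r} = 1 := by
  classical
  refine exists_const_of_dichotomy μ f hf ?_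
  intro t
  by_contra hcontra
  push_neg at hcontra
  obtain ⟨h0, h1⟩ := hcontra
  set A := {X : RootedGraph Δ | f X ≤ t} with hAdef
  have hAmeas : MeasurableSet A := hf measurableSet_Iic
  have hAinv : ∀ (X : RootedGraph Δ) (v : X.verts), (X.reroot v ∈ A ↔ X ∈ A) := by
    intro X v
    simp only [hAdef, Set.mem_setOf_eq, hinv]
  have hμA1 : μ A ≠ ⊤ := measure_ne_top μ _
  set p' := (μ A).toReal with hp'
  have hp'0 : 0 < p' := ENNReal.toReal_pos h0 hμA1
  have hp'1 : p' < 1 := by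
    rcases lt_or_eq_of_le (prob_le_one (μ := μ) (s := A)) with h | h
    · have := (ENNReal.toReal_lt_toReal hμA1 (by simp : (1:ℝ≥0∞) ≠ ⊤)).mpr h
      simpa using this
    · exact absurd h h1
  set δ := min p' (1 - p') with hδdef
  have hδpos : 0 < δ := lt_min hp'0 (by linarith)
  set K : ℝ := (Δ : ℝ) + 2*(Δ:ℝ)^2 with hK
  have hKnn : 0 ≤ K := by positivity
  set ε0 := min (δ/2) (c*δ/(2*(K+1))) with hε0def
  have hε0pos : 0 < ε0 := lt_min (by linarith) (by positivity)
  set ε : ℝ≥0∞ := ENNReal.ofReal ε0 with hεdef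
  have hεne : ε ≠ 0 := by
    simp only [hεdef, ne_eq, ENNReal.ofReal_eq_zero, not_le]
    exact hε0pos
  have hεtop : ε ≠ ⊤ := ENNReal.ofReal_ne_top
  -- approximate A by a finite union of atoms
  obtain ⟨B, hBalg, hAB, hBA⟩ := RIT.approx Δ μ hAmeas hεne
  obtain ⟨R, T, hT, rfl⟩ := hBalg
  have hBalg' : RIT.EvU Δ R T ∈ RIT.UAlg Δ := ⟨R, T, hT, rfl⟩
  set Tc := {j | RIT.isRep Δ R j} \ T with hTcdef
  have hTc' : ∀ j ∈ Tc, RIT.isRep Δ R j := fun j hj => hj.1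
  have hBc : (RIT.EvU Δ R T)ᶜ = RIT.EvU Δ R Tc := RIT.EvU_compl Δ R T hT
  set T1 := {j' : RIT.JJ Δ (R+1) | RIT.isRep Δ (R+1) j' ∧
    ∃ j ∈ T, RIT.typed Δ R j j'.2.1 j'.2.2} with hT1def
  have hBT1 : RIT.EvU Δ R T = RIT.EvU Δ (R+1) T1 := RIT.EvU_refine Δ (Nat.le_succ R) T
  set TD := T1 ∩ RIT.TN Δ Tc with hTDdef
  have hTD' : ∀ j ∈ TD, RIT.isRep Δ (R+1) j := fun j hj => hj.1.1
  -- event identity for the "boundary" event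
  have hDEv : RIT.EvU Δ R T ∩ RIT.NB Δ ((RIT.EvU Δ R T)ᶜ) = RIT.EvU Δ (R+1) TD := by
    rw [hBc, RIT.NB_EvU, hBT1,
      RIT.EvU_inter Δ (R+1) T1 (RIT.TN Δ Tc) (fun j hj => hj.1) (fun j hj => hj.1)]
  -- μ-side bound on the boundary event
  have hDbound : μ (RIT.EvU Δ (R+1) TD) ≤ ε + (Δ:ℝ≥0∞) * (ε + ε) := by
    rw [← hDEv]
    have hsub : RIT.EvU Δ R T ∩ RIT.NB Δ ((RIT.EvU Δ R T)ᶜ)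
        ⊆ (RIT.EvU Δ R T \ A) ∪ RIT.NB Δ (A \ RIT.EvU Δ R T) := by
      rintro X ⟨hXB, w, hadj, hw⟩
      by_cases hXA : X ∈ A
      · exact Or.inr ⟨w, hadj, (hAinv X w).mpr hXA, hw⟩
      · exact Or.inl ⟨hXB, hXA⟩
    calc μ (RIT.EvU Δ R T ∩ RIT.NB Δ ((RIT.EvU Δ R T)ᶜ))
        ≤ μ ((RIT.EvU Δ R T \ A) ∪ RIT.NB Δ (A \ RIT.EvU Δ R T)) := measure_mono hsub
    _ ≤ μ (RIT.EvU Δ R T \ A) + μ (RIT.NB Δ (A \ RIT.EvU Δ R T)) := measure_union_le _ _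
    _ ≤ ε + (Δ:ℝ≥0∞) * (μ (A \ RIT.EvU Δ R T) + ε) :=
        add_le_add hBA (RIT.NB_measure_le Δ G μ hdeg hlwc
          (hAmeas.diff (RIT.UAlg_measurable Δ hBalg')) hεne)
    _ ≤ ε + (Δ:ℝ≥0∞) * (ε + ε) :=
        add_le_add le_rfl (mul_le_mul_right (add_le_add hAB le_rfl) _)
  -- convergence statements
  have lB := RIT.tendsto_EvU Δ G μ hlwc R T hT
  have lBc := RIT.tendsto_EvU Δ G μ hlwc R Tc hTc'
  have lD := RIT.tendsto_EvU Δ G μ hlwc (R+1) TD hTD'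
  set pB := (μ (RIT.EvU Δ R T)).toReal with hpB
  set qB := (μ (RIT.EvU Δ R Tc)).toReal with hqB
  set dD := (μ (RIT.EvU Δ (R+1) TD)).toReal with hdD
  -- the per-n geometric inequality
  have hper : ∀ n,
      c * min (({v : V n | ∃ j ∈ T, RIT.typed Δ R j (G n) v}.ncard : ℝ) / (Fintype.card (V n)))
        (({v : V n | ∃ j ∈ Tc, RIT.typed Δ R j (G n) v}.ncard : ℝ) / (Fintype.card (V n)))
      ≤ (Δ:ℝ) * (({v : V n | ∃ j ∈ TD, RIT.typed Δ (R+1) j (G n) v}.ncard : ℝ) /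
        (Fintype.card (V n))) := by
    intro n
    set S := {v : V n | ∃ j ∈ T, RIT.typed Δ R j (G n) v} with hSdef
    set Dn := {v : V n | ∃ j ∈ TD, RIT.typed Δ (R+1) j (G n) v} with hDndef
    have hfinn : ∀ u : V n, ((G n).neighborSet u).Finite := fun u => Set.toFinite _
    have hScompl : {v : V n | ∃ j ∈ Tc, RIT.typed Δ R j (G n) v} = Sᶜ := by
      ext v
      simp only [Set.mem_compl_iff, hSdef, Set.mem_setOf_eq]
      exact RIT.typed_compl Δ T hT (G n) v hfinn (hdeg n)
    rw [hScompl]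
    -- the boundary vertices lie in Dn
    have hbd : {u | u ∈ S ∧ ∃ w, (G n).Adj u w ∧ w ∉ S} ⊆ Dn := by
      rintro u ⟨huS, w, hadj, hwS⟩
      have hw' : ∃ j ∈ Tc, RIT.typed Δ R j (G n) w :=
        (RIT.typed_compl Δ T hT (G n) w hfinn (hdeg n)).mpr hwS
      obtain ⟨j', hj'rep, hj'⟩ := RIT.typed_exists Δ (G n) u (R+1) hfinn (hdeg n)
      refine ⟨j', ⟨⟨hj'rep, ?_⟩, ⟨hj'rep, ?_⟩⟩, hj'⟩
      · obtain ⟨j, hjT, hj⟩ := huS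
        exact ⟨j, hjT, RIT.typed_mono' Δ (Nat.le_succ R) hj' hj⟩
      · exact RIT.phi_local Δ Tc hj' ⟨w, hadj, hw'⟩
    have hchain : c * min (S.ncard : ℝ) (Sᶜ.ncard : ℝ) ≤ (Δ:ℝ) * (Dn.ncard : ℝ) := by
      calc c * min (S.ncard : ℝ) (Sᶜ.ncard : ℝ) ≤ (edgeCut (G n) S : ℝ) :=
            cheeger_min (G n) (hcheeger n) hc.le S
      _ ≤ ((Δ * {u | u ∈ S ∧ ∃ w, (G n).Adj u w ∧ w ∉ S}.ncard : ℕ) : ℝ) := by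
            exact_mod_cast edgeCut_le_boundary (G n) (hdeg n) S
      _ ≤ (Δ:ℝ) * (Dn.ncard : ℝ) := by
            push_cast
            have := Set.ncard_le_ncard hbd (Set.toFinite _)
            have h2 : ({u | u ∈ S ∧ ∃ w, (G n).Adj u w ∧ w ∉ S}.ncard : ℝ)
                ≤ (Dn.ncard : ℝ) := by exact_mod_cast this
            nlinarith [h2, (by positivity : (0:ℝ) ≤ (Δ:ℝ))]
    rcases Nat.eq_zero_or_pos (Fintype.card (V n)) with hN0 | hNpos
    · rw [hN0]
      simp
    · have hN : (0:ℝ) ≤ (Fintype.card (V n) : ℝ) := by positivity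
      rw [min_div_div_right hN, mul_div_assoc', mul_div_assoc']
      exact div_le_div_of_nonneg_right hchain hN
  have hlim : c * min pB qB ≤ (Δ:ℝ) * dD :=
    le_of_tendsto_of_tendsto' ((lB.min lBc).const_mul c) (lD.const_mul (Δ:ℝ)) hper
  -- numeric bound on dD
  have hdDle : dD ≤ ε0 + (Δ:ℝ) * (ε0 + ε0) := by
    have htop : ε + (Δ:ℝ≥0∞) * (ε + ε) ≠ ⊤ := by
      refine ENNReal.add_ne_top.mpr ⟨hεtop, ENNReal.mul_ne_top (by simp)
        (ENNReal.add_ne_top.mpr ⟨hεtop, hεtop⟩)⟩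
    have := ENNReal.toReal_mono htop hDbound
    rw [ENNReal.toReal_add hεtop (ENNReal.mul_ne_top (by simp)
      (ENNReal.add_ne_top.mpr ⟨hεtop, hεtop⟩)), ENNReal.toReal_mul,
      ENNReal.toReal_add hεtop hεtop] at this
    simpa [hεdef, ENNReal.toReal_ofReal hε0pos.le] using this
  -- lower bounds on pB and qB
  have hpBlb : p' - ε0 ≤ pB := by
    have hle : μ A ≤ μ (RIT.EvU Δ R T) + ε := by
      calc μ A ≤ μ (RIT.EvU Δ R T ∪ (A \ RIT.EvU Δ R T)) := by
            refine measure_mono (fun x hx => ?_)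
            by_cases hxB : x ∈ RIT.EvU Δ R T
            · exact Or.inl hxB
            · exact Or.inr ⟨hx, hxB⟩
      _ ≤ μ (RIT.EvU Δ R T) + μ (A \ RIT.EvU Δ R T) := measure_union_le _ _
      _ ≤ μ (RIT.EvU Δ R T) + ε := add_le_add le_rfl hAB
    have htop : μ (RIT.EvU Δ R T) + ε ≠ ⊤ :=
      ENNReal.add_ne_top.mpr ⟨measure_ne_top μ _, hεtop⟩
    have := ENNReal.toReal_mono htop hle
    rw [ENNReal.toReal_add (measure_ne_top μ _) hεtop] at this
    rw [hp', hpB] at *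
    simp only [hεdef, ENNReal.toReal_ofReal hε0pos.le] at this
    linarith
  have hqBlb : (1 - p') - ε0 ≤ qB := by
    have hle : μ Aᶜ ≤ μ (RIT.EvU Δ R Tc) + ε := by
      calc μ Aᶜ ≤ μ ((RIT.EvU Δ R T)ᶜ ∪ (RIT.EvU Δ R T \ A)) := by
            refine measure_mono (fun x hx => ?_)
            by_cases hxB : x ∈ RIT.EvU Δ R T
            · exact Or.inr ⟨hxB, hx⟩
            · exact Or.inl hxB
      _ ≤ μ ((RIT.EvU Δ R T)ᶜ) + μ (RIT.EvU Δ R T \ A) := measure_union_le _ _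
      _ ≤ μ (RIT.EvU Δ R Tc) + ε := by
            rw [hBc]
            exact add_le_add le_rfl hBA
    have hμAc : (μ Aᶜ).toReal = 1 - p' := by
      rw [measure_compl hAmeas (measure_ne_top μ _), measure_univ,
        ENNReal.toReal_sub_of_le prob_le_one (by simp)]
      simp [hp']
    have htop : μ (RIT.EvU Δ R Tc) + ε ≠ ⊤ :=
      ENNReal.add_ne_top.mpr ⟨measure_ne_top μ _, hεtop⟩
    have := ENNReal.toReal_mono htop hle
    rw [ENNReal.toReal_add (measure_ne_top μ _) hεtop, hμAc] at this
    simp only [hεdef, ENNReal.toReal_ofReal hε0pos.le] at this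
    rw [hqB]
    linarith
  -- final contradiction
  have hδlb : δ - ε0 ≤ min pB qB := by
    refine le_min ?_ ?_
    · have : δ ≤ p' := min_le_left _ _
      linarith
    · have : δ ≤ 1 - p' := min_le_right _ _
      linarith
  have hε0δ : ε0 ≤ δ/2 := min_le_left _ _
  have hε0K : ε0 ≤ c*δ/(2*(K+1)) := min_le_right _ _
  have hchain2 : c * (δ - ε0) ≤ K * ε0 := by
    have h := le_trans (le_trans (mul_le_mul_of_nonneg_left hδlb hc.le) hlim)
      (mul_le_mul_of_nonneg_left hdDle (by positivity))
    calc c * (δ - ε0) ≤ (Δ:ℝ) * (ε0 + (Δ:ℝ) * (ε0 + ε0)) := h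
    _ = K * ε0 := by rw [hK]; ring
  have hcc : c * (δ/2) ≤ K * (c*δ/(2*(K+1))) := by
    have t1 : c * (δ/2) ≤ c * (δ - ε0) := mul_le_mul_of_nonneg_left (by linarith) hc.le
    have t2 : K * ε0 ≤ K * (c*δ/(2*(K+1))) := mul_le_mul_of_nonneg_left hε0K hKnn
    exact le_trans (le_trans t1 hchain2) t2
  have hK1 : (0:ℝ) < 2*(K+1) := by linarith
  have hu : (c*δ/(2*(K+1))) * (2*(K+1)) = c*δ := div_mul_cancel₀ _ (ne_of_gt hK1)
  have hcd : 0 < c * δ := mul_pos hc hδpos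
  have hmul := mul_le_mul_of_nonneg_right hcc hK1.le
  rw [mul_assoc K _ _, hu] at hmul
  nlinarith [hmul, hcd]
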